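/- Let p, q be non-negative integers, not both zero. Define g_{(p,q)} ∈ ℤ[w,x] as follows: if 0 ≤ p ≤ q, set g_{(p,q)} = Σ_{j=0}^{p+q} C(p+q, j)·(-1)^j·s_{q-p+j-1}; if 0 ≤ q < p, set g_{(p,q)} = Σ_{j=0}^{p-q-1} C(p+q, j)·(-wx)^j·s_{p-q-j-1} - Σ_{j=p-q+1}^{p+q} C(p+q, j)·(-1)^j·(wx)^{p-q}·s_{j+q-p-1}, where s_d denotes the complete homogeneous symmetric polynomial of degree d in w, x (with s_{-1}=0). Then in the first case (w-x)·g_{(p,q)} = w^{q-p}(1-w)^{p+q} - x^{q-p}(1-x)^{p+q}, and in the second case (w-x)·g_{(p,q)} = w^{p-q}(1-x)^{p+q} - x^{p-q}(1-w)^{p+q}. -/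

import Mathlib

open MvPolynomial

/-- Complete homogeneous symmetric polynomial of degree `d` in `w = X 0`, `x = X 1`,
with the convention `s d = 0` for `d < 0`. -/
noncomputable def s (d : ℤ) : MvPolynomial (Fin 2) ℤ :=
  if d < 0 then 0
  else ∑ j ∈ Finset.range (d.toNat + 1), X 0 ^ j * X 1 ^ (d.toNat - j)

lemma geom_s (d : ℕ) : (X 0 - X 1 : MvPolynomial (Fin 2) ℤ) * s ((d : ℤ) - 1) = X 0 ^ d - X 1 ^ d := by
  cases d with
  | zero => simp [s]
  | succ k =>
    have h1 : ((k + 1 : ℕ) : ℤ) - 1 = (k : ℤ) := by push_cast; ring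
    rw [h1, s, if_neg (by omega), Int.toNat_natCast, mul_comm]
    exact geom_sum₂_mul _ _ (k + 1)

theorem stmt15 (p q : ℕ) (hpq : ¬ (p = 0 ∧ q = 0)) :
    (p ≤ q →
      (X 0 - X 1 : MvPolynomial (Fin 2) ℤ) *
        (∑ j ∈ Finset.range (p + q + 1),
          C ((-1 : ℤ) ^ j * ((p + q).choose j : ℤ)) * s ((q : ℤ) - p + j - 1)) =
      X 0 ^ (q - p) * (1 - X 0) ^ (p + q) - X 1 ^ (q - p) * (1 - X 1) ^ (p + q)) ∧
    (q < p →
      (X 0 - X 1 : MvPolynomial (Fin 2) ℤ) *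
        ((∑ j ∈ Finset.range (p - q),
            C (((p + q).choose j : ℤ)) * (-(X 0 * X 1)) ^ j * s ((p : ℤ) - q - j - 1)) -
         (∑ j ∈ Finset.Icc (p - q + 1) (p + q),
            C ((-1 : ℤ) ^ j * ((p + q).choose j : ℤ)) * (X 0 * X 1) ^ (p - q) *
              s ((j : ℤ) + q - p - 1))) =
      X 0 ^ (p - q) * (1 - X 1) ^ (p + q) - X 1 ^ (p - q) * (1 - X 0) ^ (p + q)) := by
  constructor
  · -- case p ≤ q
    intro hle
    rw [Finset.mul_sum]
    have key : ∀ j ∈ Finset.range (p + q + 1),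
        (X 0 - X 1 : MvPolynomial (Fin 2) ℤ) *
          (C ((-1 : ℤ) ^ j * ((p + q).choose j : ℤ)) * s ((q : ℤ) - p + j - 1)) =
        C ((-1 : ℤ) ^ j * ((p + q).choose j : ℤ)) *
          (X 0 ^ (q - p + j) - X 1 ^ (q - p + j)) := by
      intro j _
      have h : (q : ℤ) - p + j - 1 = ((q - p + j : ℕ) : ℤ) - 1 := by omega
      rw [h, mul_left_comm, geom_s]
    rw [Finset.sum_congr rfl key,
      show (1 - X 0 : MvPolynomial (Fin 2) ℤ) = -X 0 + 1 by ring,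
      show (1 - X 1 : MvPolynomial (Fin 2) ℤ) = -X 1 + 1 by ring,
      add_pow, add_pow, Finset.mul_sum, Finset.mul_sum, ← Finset.sum_sub_distrib]
    refine Finset.sum_congr rfl fun j _ => ?_
    simp only [one_pow, pow_add, map_mul, map_pow, map_neg, map_one, map_natCast]
    ring
  · -- case q < p
    intro hlt
    have hq : q ≤ p := le_of_lt hlt
    set m := p - q with hmdef
    set N := p + q with hNdef
    have hm1 : 1 ≤ m := by omega
    have hmN : m ≤ N := by omega
    set F : ℕ → MvPolynomial (Fin 2) ℤ := fun k =>
      X 0 ^ m * ((-X 1) ^ k * (1 : MvPolynomial (Fin 2) ℤ) ^ (N - k) * (N.choose k : MvPolynomial (Fin 2) ℤ)) -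
      X 1 ^ m * ((-X 0) ^ k * (1 : MvPolynomial (Fin 2) ℤ) ^ (N - k) * (N.choose k : MvPolynomial (Fin 2) ℤ)) with hF
    have eA : ∀ j ∈ Finset.range m,
        (X 0 - X 1 : MvPolynomial (Fin 2) ℤ) *
          (C ((N.choose j : ℤ)) * (-(X 0 * X 1)) ^ j * s ((p : ℤ) - q - j - 1)) = F j := by
      intro j hj
      rw [Finset.mem_range] at hj
      have harg : (p : ℤ) - q - j - 1 = ((m - j : ℕ) : ℤ) - 1 := by omega
      obtain ⟨k, hk1, hk2⟩ : ∃ k, m = j + k ∧ m - j = k := ⟨m - j, by omega, rfl⟩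
      rw [harg, hk2]
      simp only [hF, hk1]
      have hg := geom_s k
      simp only [one_pow, pow_add, map_natCast]
      linear_combination ((N.choose j : MvPolynomial (Fin 2) ℤ) * (-(X 0 * X 1)) ^ j) * hg
    have eB : ∀ j ∈ Finset.Icc (m + 1) N,
        (X 0 - X 1 : MvPolynomial (Fin 2) ℤ) *
          (C ((-1 : ℤ) ^ j * (N.choose j : ℤ)) * (X 0 * X 1) ^ m * s ((j : ℤ) + q - p - 1)) = -F j := by
      intro j hj
      rw [Finset.mem_Icc] at hj
      have harg : (j : ℤ) + q - p - 1 = ((j - m : ℕ) : ℤ) - 1 := by omega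
      obtain ⟨k, hk1, hk2⟩ : ∃ k, j = m + k ∧ j - m = k := ⟨j - m, by omega, rfl⟩
      rw [harg, hk2]
      simp only [hF, hk1]
      have hg := geom_s k
      simp only [one_pow, pow_add, map_mul, map_pow, map_neg, map_one, map_natCast]
      linear_combination ((-1 : MvPolynomial (Fin 2) ℤ) ^ m * (-1) ^ k * (N.choose (m + k) : MvPolynomial (Fin 2) ℤ) * (X 0 * X 1) ^ m) * hg
    calc (X 0 - X 1 : MvPolynomial (Fin 2) ℤ) *
        ((∑ j ∈ Finset.range m, C ((N.choose j : ℤ)) * (-(X 0 * X 1)) ^ j * s ((p : ℤ) - q - j - 1)) -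
         (∑ j ∈ Finset.Icc (m + 1) N,
            C ((-1 : ℤ) ^ j * (N.choose j : ℤ)) * (X 0 * X 1) ^ m * s ((j : ℤ) + q - p - 1)))
        = (∑ j ∈ Finset.range m, F j) - ∑ j ∈ Finset.Icc (m + 1) N, -F j := by
          rw [mul_sub, Finset.mul_sum, Finset.mul_sum, Finset.sum_congr rfl eA,
            Finset.sum_congr rfl eB]
      _ = (∑ j ∈ Finset.range m, F j) + ∑ j ∈ Finset.Icc (m + 1) N, F j := by
          rw [Finset.sum_neg_distrib, sub_neg_eq_add]
      _ = ∑ j ∈ Finset.range (N + 1), F j := by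
          have hFm : F m = 0 := by simp only [hF]; ring
          have hsplit := Finset.sum_Ico_consecutive F (Nat.zero_le m) (show m ≤ N + 1 by omega)
          rw [Finset.range_eq_Ico, Finset.range_eq_Ico, ← hsplit,
            Finset.sum_eq_sum_Ico_succ_bot (show m < N + 1 by omega), hFm, zero_add,
            Finset.Ico_add_one_right_eq_Icc, ← Finset.range_eq_Ico]
      _ = X 0 ^ m * (1 - X 1) ^ N - X 1 ^ m * (1 - X 0) ^ N := by
          rw [show (1 - X 0 : MvPolynomial (Fin 2) ℤ) = -X 0 + 1 by ring,
            show (1 - X 1 : MvPolynomial (Fin 2) ℤ) = -X 1 + 1 by ring,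
            add_pow, add_pow, Finset.mul_sum, Finset.mul_sum, ← Finset.sum_sub_distrib]
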